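/- Let a = −1 and let f : ℝ → ℝ be any function. Then for every point p = (x,y,z) ∈ ℝ³, the derivative of the function N(x,y,z) = x² + y² + z² along the field V_{−1,f} equals 4z(x² + y² + z² − 1); in particular this derivative vanishes at every point of the unit sphere {x² + y² + z² = 1}, so the unit sphere is an invariant surface of V_{−1,f}. -/

import Mathlib

/-- `H_a(x,y,z) = (x² + y²)(x² + y² + z² + a)`. -/
noncomputable def Ha3 (a : ℝ) : ℝ × ℝ × ℝ → ℝ :=
  fun p => (p.1 ^ 2 + p.2.1 ^ 2) * (p.1 ^ 2 + p.2.1 ^ 2 + p.2.2 ^ 2 + a)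

/-- The vortex-plug vector field
`V_{a,f}(x,y,z) = (−2xz − f(H_a)·y, −2yz + f(H_a)·x, 2(2(x²+y²)+z²+a))`. -/
noncomputable def Vaf (a : ℝ) (f : ℝ → ℝ) : ℝ × ℝ × ℝ → ℝ × ℝ × ℝ :=
  fun p =>
    (-2 * p.1 * p.2.2 - f (Ha3 a p) * p.2.1,
      -2 * p.2.1 * p.2.2 + f (Ha3 a p) * p.1,
      2 * (2 * (p.1 ^ 2 + p.2.1 ^ 2) + p.2.2 ^ 2 + a))

/-- `N(x,y,z) = x² + y² + z²`. -/
noncomputable def Nsq : ℝ × ℝ × ℝ → ℝ :=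
  fun p => p.1 ^ 2 + p.2.1 ^ 2 + p.2.2 ^ 2

theorem fderiv_Nsq_apply (p v : ℝ × ℝ × ℝ) :
    fderiv ℝ Nsq p v = 2 * (p.1 * v.1 + p.2.1 * v.2.1 + p.2.2 * v.2.2) := by
  have hx : HasFDerivAt (fun q : ℝ × ℝ × ℝ => q.1) (ContinuousLinearMap.fst ℝ ℝ (ℝ × ℝ)) p :=
    hasFDerivAt_fst
  have hy := (hasFDerivAt_snd (𝕜 := ℝ) (p := p)).fst
  have hz := (hasFDerivAt_snd (𝕜 := ℝ) (p := p)).snd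
  have hN : HasFDerivAt Nsq _ p := ((hx.pow 2).add (hy.pow 2)).add (hz.pow 2)
  rw [hN.fderiv]
  simp only [Nat.add_one_sub_one, pow_one, nsmul_eq_mul, Nat.cast_ofNat,
    add_apply, smul_apply, ContinuousLinearMap.coe_fst',
    smul_eq_mul, ContinuousLinearMap.comp_apply, ContinuousLinearMap.coe_snd']
  ring

/- The rotational part `f(H_a)·(−y, x, 0)` of the field is orthogonal to `∇N = 2p`,
so `f` drops out. -/
theorem fderiv_Nsq_Vaf (a : ℝ) (f : ℝ → ℝ) (p : ℝ × ℝ × ℝ) :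
    fderiv ℝ Nsq p (Vaf a f p) = 4 * p.2.2 * (Nsq p + a) := by
  rw [fderiv_Nsq_apply]
  simp only [Vaf, Nsq]
  ring

/-- For `a = −1` and any `f`, the derivative of `N = x²+y²+z²` along `V_{−1,f}` equals
`4z(x²+y²+z²−1)`; in particular it vanishes on the unit sphere `{N = 1}`, which is
therefore an invariant surface of `V_{−1,f}`. -/
theorem stmt9 (f : ℝ → ℝ) (p : ℝ × ℝ × ℝ) :
    fderiv ℝ Nsq p (Vaf (-1) f p) = 4 * p.2.2 * (Nsq p - 1) ∧
    (Nsq p = 1 → fderiv ℝ Nsq p (Vaf (-1) f p) = 0) := by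
  have hderiv : fderiv ℝ Nsq p (Vaf (-1) f p) = 4 * p.2.2 * (Nsq p - 1) := by
    rw [fderiv_Nsq_Vaf, ← sub_eq_add_neg]
  exact ⟨hderiv, fun hp => by rw [hderiv, hp, sub_self, mul_zero]⟩
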